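/- Let ψ be an N-function on ℝ_{≥0} with Fenchel conjugate ψ*, and suppose ψ* satisfies the Δ₂-condition with constant K. Let c ≥ 0 and define the shifted conjugate (ψ_c)* as the conjugate of the shifted function ψ_c(t) = ∫₀ᵗ ψ'(c+s)·(s/(c+s)) ds. In the special case ψ(t) = ∫₀ᵗ (δ+s)^{p-2}s ds with p > 1 and δ ≥ 0, show: for all λ ∈ [0,1] and t ≥ 0, (ψ_c)*(λt) ≤ C·max{λ^{p'}, λ²}·(ψ_c)*(t), where C depends only on p and p' = p/(p−1). -/

import Mathlib

/-- The Fenchel conjugate `ψ*(t) = sup_{s ≥ 0} (s t − ψ s)`. -/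
noncomputable def fconj (ψ : ℝ → ℝ) (t : ℝ) : ℝ :=
  sSup ((fun s => s * t - ψ s) '' Set.Ici 0)

/-- The shifted N-function `ψ_c(t) = ∫₀ᵗ ψ'(c+s) · s/(c+s) ds` in the special
case `ψ(t) = ∫₀ᵗ (δ+s)^(p-2) s ds`, i.e. `ψ'(r) = (δ+r)^(p-2) r`. -/
noncomputable def shiftPhi (p δ c t : ℝ) : ℝ :=
  ∫ s in (0:ℝ)..t, ((δ + (c + s)) ^ (p - 2) * (c + s)) * (s / (c + s))

/-!
On `[0, ∞)` the shifted function `ψ_c` is `φ_d(t) = ∫₀ᵗ (d + r)^(p-2) r dr` with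
`d = δ + c` (`powerPhi p d`). For `m ∈ (0, 1]` and `q = max p 2` one has
`m^(q-1) φ_d'(r) ≤ φ_d'(m r)`, hence `m^q φ_d(s) ≤ φ_d(m s)`. Substituting `s = l^(q'-1) u` in
the supremum defining the conjugate, with `q'` the Hölder conjugate of `q`, turns this into
`φ_d*(l t) ≤ l^q' φ_d*(t)`; and `l^q' = max (l^p') (l^2)` because `q' = min p' 2`.
-/

open Real Set Filter MeasureTheory

noncomputable def powerPhiDeriv (p d r : ℝ) : ℝ := (d + r) ^ (p - 2) * r

noncomputable def powerPhi (p d t : ℝ) : ℝ := ∫ r in (0:ℝ)..t, powerPhiDeriv p d r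

theorem fconj_congr {ψ φ : ℝ → ℝ} (h : EqOn ψ φ (Ici 0)) : fconj ψ = fconj φ := by
  ext t
  unfold fconj
  rw [image_congr fun s hs => by rw [h hs]]

theorem fconj_mul_le_rpow_mul {ψ : ℝ → ℝ} {q q' : ℝ} (hqq' : q.HolderConjugate q')
    (hψ : ∀ s, 0 ≤ s → 0 ≤ ψ s)
    (hscale : ∀ m s, 0 < m → m ≤ 1 → 0 ≤ s → m ^ q * ψ s ≤ ψ (m * s))
    {t l : ℝ} (hbdd : BddAbove ((fun s => s * t - ψ s) '' Ici 0)) (hl0 : 0 ≤ l)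
    (hl1 : l ≤ 1) :
    fconj ψ (l * t) ≤ l ^ q' * fconj ψ t := by
  refine csSup_le (nonempty_Ici.image _) ?_
  rintro _ ⟨s, hs, rfl⟩
  obtain rfl | hl := hl0.eq_or_lt
  · simpa [zero_rpow hqq'.symm.pos.ne'] using hψ s hs
  have hml : l ^ (q' - 1) * l = l ^ q' := by rw [rpow_sub_one hl.ne', div_mul_cancel₀ _ hl.ne']
  have hmq : (l ^ (q' - 1)) ^ q = l ^ q' := by rw [← rpow_mul hl0, hqq'.symm.sub_one_mul_conj]
  set m := l ^ (q' - 1)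
  have hm : 0 < m := rpow_pos_of_pos hl _
  have hm1 : m ≤ 1 := rpow_le_one hl0 hl1 (by linarith [hqq'.symm.lt])
  have hu : 0 ≤ s / m := div_nonneg hs hm.le
  have hψs : l ^ q' * ψ (s / m) ≤ ψ s := by
    simpa [hmq, mul_div_cancel₀ s hm.ne'] using hscale m (s / m) hm hm1 hu
  calc s * (l * t) - ψ s ≤ l ^ q' * (s / m * t - ψ (s / m)) := by
        have : s * (l * t) = l ^ q' * (s / m * t) := by
          rw [← hml]; field_simp
        linarith
    _ ≤ l ^ q' * fconj ψ t :=
        mul_le_mul_of_nonneg_left (le_csSup hbdd ⟨s / m, hu, rfl⟩) (rpow_nonneg hl0 _)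

theorem rpow_min_eq_max {l a b : ℝ} (hl0 : 0 ≤ l) (hl1 : l ≤ 1) (ha : 0 < a) (hb : 0 < b) :
    l ^ min a b = max (l ^ a) (l ^ b) := by
  obtain rfl | hl := hl0.eq_or_lt
  · simp [zero_rpow, ha.ne', hb.ne', (lt_min ha hb).ne']
  · exact (antitone_rpow_of_base_le_one hl hl1).map_min

theorem holderConjugate_max_two_min_two {p : ℝ} (hp : 1 < p) :
    (max p 2).HolderConjugate (min (p / (p - 1)) 2) := by
  have hp1 : 0 < p - 1 := by linarith
  rcases le_total p 2 with h2 | h2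
  · rw [max_eq_right h2, min_eq_right ((le_div_iff₀ hp1).2 (by linarith))]
    exact HolderConjugate.two_two
  · rw [max_eq_left h2, min_eq_left ((div_le_iff₀ hp1).2 (by linarith))]
    exact HolderConjugate.conjExponent hp

section PowerPhi

variable {p d : ℝ}

theorem powerPhiDeriv_nonneg (hd : 0 ≤ d) {r : ℝ} (hr : 0 ≤ r) : 0 ≤ powerPhiDeriv p d r :=
  mul_nonneg (rpow_nonneg (by linarith) _) hr

theorem continuousOn_powerPhiDeriv (hp : 1 < p) (hd : 0 ≤ d) :
    ContinuousOn (powerPhiDeriv p d) (Ici 0) := by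
  obtain rfl | hd := hd.eq_or_lt
  · have h : EqOn (fun r : ℝ => r ^ (p - 1)) (powerPhiDeriv p 0) (Ici 0) := fun r hr => by
      rw [powerPhiDeriv, zero_add, ← rpow_add_one' (mem_Ici.1 hr) (by linarith)]
      ring_nf
    exact (continuousOn_id.rpow_const fun _ _ => Or.inr (by linarith)).congr h.symm
  · exact ((continuousOn_const.add continuousOn_id).rpow_const fun r hr =>
      Or.inl (add_pos_of_pos_of_nonneg hd hr).ne').mul continuousOn_id

theorem intervalIntegrable_powerPhiDeriv (hp : 1 < p) (hd : 0 ≤ d) {a b : ℝ} (ha : 0 ≤ a)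
    (hb : 0 ≤ b) : IntervalIntegrable (powerPhiDeriv p d) volume a b :=
  ((continuousOn_powerPhiDeriv hp hd).mono fun _ hx =>
    le_trans (le_inf ha hb) hx.1).intervalIntegrable

theorem powerPhi_nonneg (hd : 0 ≤ d) {t : ℝ} (ht : 0 ≤ t) : 0 ≤ powerPhi p d t :=
  intervalIntegral.integral_nonneg ht fun _ hr => powerPhiDeriv_nonneg hd hr.1

theorem shiftPhi_eqOn_powerPhi {δ c : ℝ} (hc : 0 ≤ c) :
    EqOn (shiftPhi p δ c) (powerPhi p (δ + c)) (Ici 0) := by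
  intro t ht
  refine intervalIntegral.integral_congr fun s hs => ?_
  rw [uIcc_of_le ht] at hs
  obtain hcs | hcs := (add_nonneg hc hs.1).eq_or_lt
  · obtain rfl : s = 0 := by linarith [hs.1]
    simp [powerPhiDeriv]
  · simp only [powerPhiDeriv, ← add_assoc]
    field_simp

theorem rpow_mul_powerPhiDeriv_le (hd : 0 ≤ d) {m r : ℝ} (hm : 0 < m) (hm1 : m ≤ 1)
    (hr : 0 ≤ r) : m ^ (max p 2 - 1) * powerPhiDeriv p d r ≤ powerPhiDeriv p d (m * r) := by
  obtain rfl | hr := hr.eq_or_lt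
  · simp [powerPhiDeriv]
  have hbase : m ^ (max p 2 - 2) * (d + r) ^ (p - 2) ≤ (d + m * r) ^ (p - 2) := by
    rcases le_total 2 p with h2 | h2
    · rw [max_eq_left h2, ← mul_rpow hm.le (by linarith)]
      exact rpow_le_rpow (by positivity) (by nlinarith) (by linarith)
    · rw [max_eq_right h2, sub_self, rpow_zero, one_mul]
      exact rpow_le_rpow_of_nonpos (by positivity) (by nlinarith) (by linarith)
  calc m ^ (max p 2 - 1) * powerPhiDeriv p d r
      = (m ^ (max p 2 - 2) * (d + r) ^ (p - 2)) * (m * r) := by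
        rw [powerPhiDeriv, show max p 2 - 1 = max p 2 - 2 + 1 by ring, rpow_add_one hm.ne']
        ring
    _ ≤ powerPhiDeriv p d (m * r) := mul_le_mul_of_nonneg_right hbase (by positivity)

theorem rpow_mul_powerPhi_le (hp : 1 < p) (hd : 0 ≤ d) {m s : ℝ} (hm : 0 < m) (hm1 : m ≤ 1)
    (hs : 0 ≤ s) : m ^ max p 2 * powerPhi p d s ≤ powerPhi p d (m * s) := by
  have hsplit : m ^ max p 2 = m * m ^ (max p 2 - 1) := by
    rw [mul_comm, ← rpow_add_one hm.ne', sub_add_cancel]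
  have hsub : powerPhi p d (m * s) = m * ∫ r in (0:ℝ)..s, powerPhiDeriv p d (m * r) := by
    have h := intervalIntegral.smul_integral_comp_mul_left (powerPhiDeriv p d) m (a := 0) (b := s)
    rw [mul_zero, smul_eq_mul] at h
    rw [powerPhi, ← h]
  rw [hsub, hsplit, mul_assoc, powerPhi, ← intervalIntegral.integral_const_mul]
  refine mul_le_mul_of_nonneg_left (intervalIntegral.integral_mono_on hs
    ((intervalIntegrable_powerPhiDeriv hp hd le_rfl hs).const_mul _) ?_
    fun r hr => rpow_mul_powerPhiDeriv_le hd hm hm1 hr.1) hm.le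
  refine ((continuousOn_powerPhiDeriv hp hd).comp (continuous_const_mul m).continuousOn
    fun r hr => ?_).intervalIntegrable
  rw [uIcc_of_le hs] at hr
  exact mul_nonneg hm.le hr.1

theorem tendsto_powerPhiDeriv_atTop (hp : 1 < p) (hd : 0 ≤ d) :
    Tendsto (powerPhiDeriv p d) atTop atTop := by
  have hlower := (tendsto_rpow_atTop (by linarith : 0 < p - 1)).atTop_div_const two_pos
  refine tendsto_atTop_mono' _ ?_ hlower
  filter_upwards [eventually_gt_atTop 0, eventually_ge_atTop d] with r hr hdr
  have hdr0 : 0 < d + r := by linarith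
  calc r ^ (p - 1) / 2 = r ^ (p - 1) * (1 / 2) := by ring
    _ ≤ (d + r) ^ (p - 1) * (r / (d + r)) :=
        mul_le_mul (rpow_le_rpow hr.le (by linarith) (by linarith))
          (by rw [div_le_div_iff₀ two_pos hdr0]; linarith) (by norm_num) (by positivity)
    _ = powerPhiDeriv p d r := by
        rw [powerPhiDeriv, show p - 2 = p - 1 - 1 by ring, rpow_sub_one hdr0.ne' (p - 1)]
        ring

theorem bddAbove_mul_sub_powerPhi (hp : 1 < p) (hd : 0 ≤ d) {t : ℝ} (ht : 0 ≤ t) :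
    BddAbove ((fun s => s * t - powerPhi p d s) '' Ici 0) := by
  obtain ⟨R₀, hR₀⟩ :=
    eventually_atTop.1 ((tendsto_powerPhiDeriv_atTop hp hd).eventually_ge_atTop t)
  set R := max R₀ 0
  have hR : 0 ≤ R := le_max_right _ _
  refine ⟨R * t, ?_⟩
  rintro _ ⟨s, hs, rfl⟩
  rcases le_total s R with hsR | hRs
  · nlinarith [powerPhi_nonneg (p := p) hd hs]
  · have htail : (s - R) * t ≤ ∫ r in R..s, powerPhiDeriv p d r := by
      simpa [mul_comm] using intervalIntegral.integral_mono_on hRs intervalIntegrable_const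
        (intervalIntegrable_powerPhiDeriv hp hd hR (hR.trans hRs))
        fun r hr => hR₀ r ((le_max_left _ _).trans hr.1)
    have hsplit := intervalIntegral.integral_add_adjacent_intervals
      (intervalIntegrable_powerPhiDeriv hp hd le_rfl hR)
      (intervalIntegrable_powerPhiDeriv hp hd hR (hR.trans hRs))
    have := powerPhi_nonneg (p := p) hd hR
    simp only [powerPhi] at this ⊢
    linarith

end PowerPhi

theorem stmt13 (p δ : ℝ) (hp : 1 < p) (hδ : 0 ≤ δ) :
    ∃ C > (0:ℝ), ∀ c ≥ (0:ℝ), ∀ l : ℝ, 0 ≤ l → l ≤ 1 → ∀ t ≥ (0:ℝ),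
      fconj (shiftPhi p δ c) (l * t) ≤
        C * max (l ^ (p / (p - 1))) (l ^ (2:ℝ)) * fconj (shiftPhi p δ c) t := by
  refine ⟨1, one_pos, fun c hc l hl0 hl1 t ht => ?_⟩
  have hd : 0 ≤ δ + c := by linarith
  rw [fconj_congr (shiftPhi_eqOn_powerPhi hc), one_mul,
    ← rpow_min_eq_max hl0 hl1 (div_pos (by linarith) (by linarith)) two_pos]
  exact fconj_mul_le_rpow_mul (holderConjugate_max_two_min_two hp)
    (fun s hs => powerPhi_nonneg hd hs) (fun m s hm hm1 hs => rpow_mul_powerPhi_le hp hd hm hm1 hs)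
    (bddAbove_mul_sub_powerPhi hp hd ht) hl0 hl1
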